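/- In the weighted-cycle lower-bound graph G_{x,y}, every simple cycle whose total edge weight equals 2k³ contains exactly two input-dependent edges, namely exactly one edge with one endpoint in A_1 and the other endpoint in A_2, and exactly one edge with one endpoint in B_1 and the other endpoint in B_2. -/

import Mathlib

/-- Vertices of the weighted-cycle lower-bound graph.  The side `s : Bool`
distinguishes the `a`'s (`false`) from the `b`'s (`true`), and `ℓ : Bool`
distinguishes index `1` (`false`) from index `2` (`true`).  So
`node false false i = a_1^i`, `node true true i = b_2^i`, and `c s ℓ` is the
center node `c_S` of the corresponding set `S ∈ {A_1, A_2, B_1, B_2}`. -/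
inductive WCVertex (k : ℕ) where
  | node (s ℓ : Bool) (i : Fin k)
  | c (s ℓ : Bool)
deriving DecidableEq

/-- Base relation generating the edges of the weighted-cycle lower-bound graph
`G_{x,y}`: each center `c_S` joined to every node of `S`; the edges
`(c_{A_1}, c_{B_1})` and `(c_{A_2}, c_{B_2})`; the input edge `(a_1^i, a_2^j)`
present iff `x i j = 1` and `(b_1^i, b_2^j)` present iff `y i j = 1`. -/
def wcRel (k : ℕ) (x y : Fin k → Fin k → Bool) (u v : WCVertex k) : Prop :=
  (∃ (s ℓ : Bool) (i : Fin k), u = WCVertex.c s ℓ ∧ v = WCVertex.node s ℓ i) ∨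
  (∃ ℓ : Bool, u = WCVertex.c false ℓ ∧ v = WCVertex.c true ℓ) ∨
  (∃ i j : Fin k, x i j = true ∧
    u = WCVertex.node false false i ∧ v = WCVertex.node false true j) ∨
  (∃ i j : Fin k, y i j = true ∧
    u = WCVertex.node true false i ∧ v = WCVertex.node true true j)

/-- The weighted-cycle lower-bound graph `G_{x,y}`. -/
def wcGraph (k : ℕ) (x y : Fin k → Fin k → Bool) : SimpleGraph (WCVertex k) :=
  SimpleGraph.fromRel (wcRel k x y)

/-- One-directional weight assignment: `k³ + ki + j` on `(a_1^i, a_2^j)`,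
`k³ − (ki + j)` on `(b_1^i, b_2^j)`, and `0` on every other pair. -/
def wcW0 (k : ℕ) : WCVertex k → WCVertex k → ℕ
  | .node false false i, .node false true j => k ^ 3 + k * i.val + j.val
  | .node true false i, .node true true j => k ^ 3 - (k * i.val + j.val)
  | _, _ => 0

/-- The (symmetric) edge-weight function of the weighted-cycle lower-bound graph. -/
def wcW (k : ℕ) (u v : WCVertex k) : ℕ := wcW0 k u v + wcW0 k v u

/-- The total weight of a walk: the sum of the weights of its edges
(one per dart of the walk). -/
def walkWeight {k : ℕ} {x y : Fin k → Fin k → Bool} {u v : WCVertex k}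
    (p : (wcGraph k x y).Walk u v) : ℕ :=
  (p.darts.map (fun d => wcW k d.fst d.snd)).sum

/-- Whether a dart is an input-dependent edge with one endpoint in `A_1` and the
other in `A_2` (side `s = false`), resp. in `B_1` and `B_2` (side `s = true`). -/
def isInputDart (k : ℕ) {x y : Fin k → Fin k → Bool} (s : Bool)
    (d : (wcGraph k x y).Dart) : Bool :=
  match d.fst, d.snd with
  | .node s₁ ℓ₁ _, .node s₂ ℓ₂ _ => s₁ == s && s₂ == s && ℓ₁ != ℓ₂
  | _, _ => false

/-!
Every input-dependent edge weighs `k³ ± (ki + j)` with `0 ≤ ki + j < k²`, and every other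
edge weighs `0`. Since `3k² ≤ k³`, a cycle of weight `2k³` therefore uses exactly two input
edges. If both lay on the same side, their offsets `ki + j` would sum to `0`, so both would be
the edge between the two nodes of index `0`, which a cycle cannot traverse twice.
-/

open SimpleGraph

lemma mul_add_lt_sq {k i j : ℕ} (hi : i < k) (hj : j < k) : k * i + j < k ^ 2 := by
  nlinarith

lemma List.sum_map_filter_of_eq_zero {α M : Type*} [AddCommMonoid M] {l : List α}
    {p : α → Bool} {f : α → M} (h : ∀ a ∈ l, p a = false → f a = 0) :
    ((l.filter p).map f).sum = (l.map f).sum := by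
  rw [← List.sum_map_filter_add_sum_map_filter_not (fun a => p a = true) f l,
    List.sum_eq_zero (l := List.map f (l.filter fun a => ¬p a = true)), add_zero]
  · simp
  · simp only [List.mem_map, List.mem_filter]
    rintro _ ⟨a, ⟨ha, hpa⟩, rfl⟩
    exact h a ha (by simpa using hpa)

lemma List.countP_filter_of_imp {α : Type*} {l : List α} {p q : α → Bool}
    (h : ∀ a, q a = true → p a = true) : (l.filter p).countP q = l.countP q := by
  rw [List.countP_filter]
  refine List.countP_congr fun a _ => ?_
  cases hq : q a <;> simp [hq, h a]

lemma List.length_eq_two_of_sum_eq {l : List ℕ} {K N : ℕ} (hK : 0 < K) (hN : 3 * N ≤ K)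
    (hl : ∀ a ∈ l, K < a + N ∧ a < K + N) (hsum : l.sum = 2 * K) : l.length = 2 := by
  rcases l with _ | ⟨a, _ | ⟨b, _ | ⟨c, t⟩⟩⟩ <;> simp at hl hsum ⊢ <;> omega

lemma three_mul_sq_le_cube {k : ℕ} (hk : 3 ≤ k) : 3 * k ^ 2 ≤ k ^ 3 := by
  rw [pow_succ, mul_comm]
  exact Nat.mul_le_mul_left _ hk

variable {k : ℕ} {x y : Fin k → Fin k → Bool}

lemma wcW_comm (u v : WCVertex k) : wcW k u v = wcW k v u := Nat.add_comm _ _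

def wcEdgeWeight (k : ℕ) : Sym2 (WCVertex k) → ℕ := Sym2.lift ⟨wcW k, wcW_comm⟩

lemma wcW_dart (d : (wcGraph k x y).Dart) : wcW k d.fst d.snd = wcEdgeWeight k d.edge := rfl

lemma wcEdgeWeight_input (s : Bool) (i j : Fin k) :
    wcEdgeWeight k s(.node s false i, .node s true j) =
      if s then k ^ 3 - (k * i + j) else k ^ 3 + (k * i + j) := by
  cases s <;> simp [wcEdgeWeight, wcW, wcW0, add_assoc]

lemma wcEdgeWeight_input_bounds (s : Bool) (i j : Fin k) :
    k ^ 3 < wcEdgeWeight k s(.node s false i, .node s true j) + k ^ 2 ∧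
      wcEdgeWeight k s(.node s false i, .node s true j) < k ^ 3 + k ^ 2 := by
  have hoff := mul_add_lt_sq i.2 j.2
  have hpow : k ^ 2 ≤ k ^ 3 := Nat.pow_le_pow_right i.pos (by norm_num)
  rw [wcEdgeWeight_input]
  split <;> omega

lemma input_edge_eq_of_wcEdgeWeight_add {s : Bool} {i₁ j₁ i₂ j₂ : Fin k}
    (h : wcEdgeWeight k s(.node s false i₁, .node s true j₁) +
      wcEdgeWeight k s(.node s false i₂, .node s true j₂) = 2 * k ^ 3) :
    s(WCVertex.node s false i₁, .node s true j₁) = s(.node s false i₂, .node s true j₂) := by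
  have hpow : k ^ 2 ≤ k ^ 3 := Nat.pow_le_pow_right i₁.pos (by norm_num)
  have hoff₁ := mul_add_lt_sq i₁.2 j₁.2
  have hoff₂ := mul_add_lt_sq i₂.2 j₂.2
  rw [wcEdgeWeight_input, wcEdgeWeight_input] at h
  have hzero : k * i₁ + j₁ = 0 ∧ k * i₂ + j₂ = 0 := by split at h <;> omega
  simp only [Nat.add_eq_zero_iff, Nat.mul_eq_zero, i₁.pos.ne', false_or] at hzero
  obtain ⟨⟨hi₁, hj₁⟩, hi₂, hj₂⟩ := hzero
  rw [Fin.ext (hi₁.trans hi₂.symm), Fin.ext (hj₁.trans hj₂.symm)]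

lemma exists_edge_eq_of_isInputDart {s : Bool} {d : (wcGraph k x y).Dart}
    (h : isInputDart k s d = true) :
    ∃ i j : Fin k, d.edge = s(.node s false i, .node s true j) := by
  revert h
  obtain ⟨⟨⟨s₁, ℓ₁, i⟩ | _, ⟨s₂, ℓ₂, j⟩ | _⟩, -⟩ := d <;>
    simp [isInputDart, Bool.and_eq_true, beq_iff_eq, bne_iff_ne]
  rintro rfl rfl hℓ
  cases ℓ₁ <;> cases ℓ₂ <;> simp at hℓ ⊢

lemma isInputDart_not {s : Bool} {d : (wcGraph k x y).Dart}
    (h : isInputDart k s d = true) : isInputDart k (!s) d = false := by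
  revert h
  obtain ⟨⟨_ | _, _ | _⟩, -⟩ := d <;> simp [isInputDart]
  grind

lemma wcW_dart_eq_zero {d : (wcGraph k x y).Dart} (h₀ : isInputDart k false d = false)
    (h₁ : isInputDart k true d = false) : wcW k d.fst d.snd = 0 := by
  revert h₀ h₁
  obtain ⟨⟨⟨_ | _, _ | _, _⟩ | _, ⟨_ | _, _ | _, _⟩ | _⟩, -⟩ := d <;> simp [isInputDart, wcW, wcW0]

lemma wcW_dart_bounds {s : Bool} {d : (wcGraph k x y).Dart} (h : isInputDart k s d = true) :
    k ^ 3 < wcW k d.fst d.snd + k ^ 2 ∧ wcW k d.fst d.snd < k ^ 3 + k ^ 2 := by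
  obtain ⟨i, j, he⟩ := exists_edge_eq_of_isInputDart h
  rw [wcW_dart, he]
  exact wcEdgeWeight_input_bounds s i j

lemma countP_isInputDart_pair {d₁ d₂ : (wcGraph k x y).Dart}
    (h₁ : ∃ s, isInputDart k s d₁ = true) (h₂ : ∃ s, isInputDart k s d₂ = true)
    (hne : d₁.edge ≠ d₂.edge) (hw : wcW k d₁.fst d₁.snd + wcW k d₂.fst d₂.snd = 2 * k ^ 3) :
    [d₁, d₂].countP (isInputDart k false) = 1 ∧ [d₁, d₂].countP (isInputDart k true) = 1 := by
  obtain ⟨s₁, h₁⟩ := h₁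
  obtain ⟨s₂, h₂⟩ := h₂
  obtain rfl | rfl := Bool.eq_or_eq_not s₂ s₁
  · obtain ⟨i₁, j₁, e₁⟩ := exists_edge_eq_of_isInputDart h₁
    obtain ⟨i₂, j₂, e₂⟩ := exists_edge_eq_of_isInputDart h₂
    rw [wcW_dart, wcW_dart, e₁, e₂] at hw
    exact absurd (e₁.trans ((input_edge_eq_of_wcEdgeWeight_add hw).trans e₂.symm)) hne
  · have h₁' := isInputDart_not h₁
    have h₂' := isInputDart_not h₂
    cases s₁ <;> simp_all

/-- in the weighted-cycle lower-bound graph `G_{x,y}` (`k ≥ 3`),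
every simple cycle of total weight `2k³` contains exactly one edge joining `A_1`
and `A_2` and exactly one edge joining `B_1` and `B_2` (and hence exactly two
input-dependent edges). -/
theorem wcGraph_cycle_two_input_edges (k : ℕ) (hk : 3 ≤ k)
    (x y : Fin k → Fin k → Bool) (v : WCVertex k)
    (p : (wcGraph k x y).Walk v v) (hp : p.IsCycle)
    (hw : walkWeight p = 2 * k ^ 3) :
    p.darts.countP (isInputDart k false) = 1 ∧
    p.darts.countP (isInputDart k true) = 1 := by
  set isInput : (wcGraph k x y).Dart → Bool :=
    fun d => isInputDart k false d || isInputDart k true d with hisInput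
  have hinput : ∀ d ∈ p.darts.filter isInput, ∃ s, isInputDart k s d = true := by
    simp [hisInput, Bool.exists_bool]
  have hsum : ((p.darts.filter isInput).map fun d => wcW k d.fst d.snd).sum = 2 * k ^ 3 := by
    rw [List.sum_map_filter_of_eq_zero, ← hw, walkWeight]
    intro d _ hd
    simp only [hisInput, Bool.or_eq_false_iff] at hd
    exact wcW_dart_eq_zero hd.1 hd.2
  have hlen : (p.darts.filter isInput).length = 2 := by
    rw [← List.length_map (f := fun d => wcW k d.fst d.snd)]
    refine List.length_eq_two_of_sum_eq (by positivity) (three_mul_sq_le_cube hk) ?_ hsum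
    simp only [List.mem_map]
    rintro _ ⟨d, hd, rfl⟩
    obtain ⟨s, hs⟩ := hinput d hd
    exact wcW_dart_bounds hs
  obtain ⟨d₁, d₂, hL⟩ := List.length_eq_two.mp hlen
  have hne : d₁.edge ≠ d₂.edge := by
    have := ((List.filter_sublist (p := isInput)).map Dart.edge).nodup hp.edges_nodup
    simpa [hL] using this
  have hcount (s : Bool) :
      p.darts.countP (isInputDart k s) = [d₁, d₂].countP (isInputDart k s) := by
    rw [← hL, List.countP_filter_of_imp]
    cases s <;> simp_all
  rw [hcount, hcount]
  rw [hL] at hsum hinput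
  exact countP_isInputDart_pair (hinput d₁ (by simp)) (hinput d₂ (by simp)) hne
    (by simpa using hsum)
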